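/- arXiv:1302.5681 — 9 statements merged into one kernel-verified Lean document; each statement's English description precedes it below -/
import Mathlib

section
/- For a finite state space S, a set P of probability measures on S with weights α_Pr ∈ [0,1], and events E1, E2 ⊆ S with ᾱ(E1 ∩ E2) > 0 (where ᾱ(E) = sup over Pr in P of α_Pr·Pr(E)), likelihood updating is consistent: (P⁺ | E1) | E2 = (P⁺ | E2) | E1 = P⁺ | (E1 ∩ E2). -/
open Finset

/-- A probability measure on a finite set, as a weight function. -/
def IsProb {S : Type*} [Fintype S] (p : S → ℝ) : Prop :=
  (∀ s, 0 ≤ p s) ∧ ∑ s, p s = 1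

/-- The mass that `p` assigns to the event `E`. -/
noncomputable def mass {S : Type*} [Fintype S] (p : S → ℝ) (E : Finset S) : ℝ :=
  ∑ s ∈ E, p s

/-- Bayesian conditioning of `p` on `E`. -/
noncomputable def condProb {S : Type*} [Fintype S] [DecidableEq S]
    (p : S → ℝ) (E : Finset S) : S → ℝ :=
  fun s => if s ∈ E then p s / mass p E else 0

/-- ᾱ(E) = sup over (Pr, α) ∈ P⁺ of α·Pr(E). -/
noncomputable def abar {S : Type*} [Fintype S]
    (P : Set ((S → ℝ) × ℝ)) (E : Finset S) : ℝ :=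
  sSup {w | ∃ pa ∈ P, w = pa.2 * mass pa.1 E}

/-- Likelihood updating of a weighted set of probability measures on event `E`. -/
noncomputable def lupdate {S : Type*} [Fintype S] [DecidableEq S]
    (P : Set ((S → ℝ) × ℝ)) (E : Finset S) : Set ((S → ℝ) × ℝ) :=
  {x | (∃ pa ∈ P, x.1 = condProb pa.1 E) ∧
       x.2 = sSup {w | ∃ qb ∈ P, condProb qb.1 E = x.1 ∧
                        w = qb.2 * mass qb.1 E / abar P E}}

section Aux
variable {S : Type*} [Fintype S] [DecidableEq S]

lemma mass_nonneg' {p : S → ℝ} (hp : ∀ s, 0 ≤ p s) (E : Finset S) : 0 ≤ mass p E :=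
  Finset.sum_nonneg fun s _ => hp s

lemma mass_mono' {p : S → ℝ} (hp : ∀ s, 0 ≤ p s) {E F : Finset S} (hEF : E ⊆ F) :
    mass p E ≤ mass p F :=
  Finset.sum_le_sum_of_subset_of_nonneg hEF fun s _ _ => hp s

lemma mass_le_one' {p : S → ℝ} (hp : IsProb p) (E : Finset S) : mass p E ≤ 1 :=
  le_trans (mass_mono' hp.1 (Finset.subset_univ E)) (le_of_eq hp.2)

lemma condProb_nonneg' {p : S → ℝ} (hp : ∀ s, 0 ≤ p s) (E : Finset S) :
    ∀ s, 0 ≤ condProb p E s := by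
  intro s
  unfold condProb
  split
  · exact div_nonneg (hp s) (mass_nonneg' hp E)
  · exact le_refl 0

lemma mass_condProb' (p : S → ℝ) (E1 E2 : Finset S) :
    mass (condProb p E1) E2 = mass p (E1 ∩ E2) / mass p E1 := by
  simp only [mass, condProb]
  rw [Finset.sum_ite_mem, Finset.inter_comm E2 E1, ← Finset.sum_div]

lemma mass_condProb_le_one {p : S → ℝ} (hp : ∀ s, 0 ≤ p s) (E1 E2 : Finset S) :
    mass (condProb p E1) E2 ≤ 1 := by
  rw [mass_condProb']
  rcases eq_or_lt_of_le (mass_nonneg' hp E1) with h0 | h0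
  · simp [← h0]
  · exact div_le_one_of_le₀ (mass_mono' hp Finset.inter_subset_left) (le_of_lt h0)

lemma mass_inter_eq_zero {p : S → ℝ} (hp : ∀ s, 0 ≤ p s) {E1 : Finset S} (E2 : Finset S)
    (h0 : mass p E1 = 0) : mass p (E1 ∩ E2) = 0 :=
  le_antisymm (h0 ▸ mass_mono' hp Finset.inter_subset_left) (mass_nonneg' hp _)

lemma mass_mul_mass_cond {p : S → ℝ} (hp : ∀ s, 0 ≤ p s) (E1 E2 : Finset S) :
    mass p E1 * mass (condProb p E1) E2 = mass p (E1 ∩ E2) := by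
  rw [mass_condProb']
  rcases eq_or_ne (mass p E1) 0 with h0 | h0
  · simp [h0, mass_inter_eq_zero hp E2 h0]
  · rw [mul_comm, div_mul_cancel₀ _ h0]

lemma condProb_condProb' {p : S → ℝ} (hp : ∀ s, 0 ≤ p s) (E1 E2 : Finset S) :
    condProb (condProb p E1) E2 = condProb p (E1 ∩ E2) := by
  funext s
  simp only [condProb, mass_condProb', Finset.mem_inter]
  by_cases h2 : s ∈ E2
  · by_cases h1 : s ∈ E1
    · simp only [h1, h2, if_true, and_true]
      rcases eq_or_ne (mass p E1) 0 with hm1 | hm1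
      · simp [hm1, mass_inter_eq_zero hp E2 hm1]
      · rcases eq_or_ne (mass p (E1 ∩ E2)) 0 with hm12 | hm12
        · simp [hm12]
        · field_simp
    · simp [h1, h2]
  · simp [h2]

lemma sSup_mul_image (c : ℝ) (hc : 0 ≤ c) (s : Set ℝ) :
    sSup ((fun x => c * x) '' s) = c * sSup s := by
  have := Real.sSup_smul_of_nonneg hc s
  rw [← Set.image_smul] at this
  simpa [smul_eq_mul] using this

end Aux
/-- The (unnormalized-by-representative) weight set used in `lupdate`. -/
noncomputable def Tset {S : Type*} [Fintype S] [DecidableEq S]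
    (P : Set ((S → ℝ) × ℝ)) (E : Finset S) (f : S → ℝ) : Set ℝ :=
  {w | ∃ qb ∈ P, condProb qb.1 E = f ∧ w = qb.2 * mass qb.1 E / abar P E}

/-- Variant of `Tset` where the constraint is on `E1` but masses are of `E1 ∩ E2`. -/
noncomputable def T12set {S : Type*} [Fintype S] [DecidableEq S]
    (P : Set ((S → ℝ) × ℝ)) (E1 E2 : Finset S) (f : S → ℝ) : Set ℝ :=
  {w | ∃ qb ∈ P, condProb qb.1 E1 = f ∧ w = qb.2 * mass qb.1 (E1 ∩ E2) / abar P E1}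

lemma lupdate_lupdate {S : Type*} [Fintype S] [DecidableEq S]
    (P : Set ((S → ℝ) × ℝ))
    (hP : ∀ pa ∈ P, IsProb pa.1 ∧ pa.2 ∈ Set.Icc (0:ℝ) 1)
    (E1 E2 : Finset S)
    (h : 0 < abar P (E1 ∩ E2)) :
    lupdate (lupdate P E1) E2 = lupdate P (E1 ∩ E2) := by
  have hnn : ∀ pa ∈ P, ∀ s, 0 ≤ pa.1 s := fun pa hpa => (hP pa hpa).1.1
  have hwm_nonneg : ∀ pa ∈ P, ∀ E : Finset S, 0 ≤ pa.2 * mass pa.1 E := fun pa hpa E =>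
    mul_nonneg (hP pa hpa).2.1 (mass_nonneg' (hnn pa hpa) E)
  have hwm_le_one : ∀ pa ∈ P, ∀ E : Finset S, pa.2 * mass pa.1 E ≤ 1 := fun pa hpa E =>
    mul_le_one₀ (hP pa hpa).2.2 (mass_nonneg' (hnn pa hpa) E) (mass_le_one' (hP pa hpa).1 E)
  have bddS : ∀ E : Finset S, BddAbove {w | ∃ pa ∈ P, w = pa.2 * mass pa.1 E} := fun E =>
    ⟨1, by rintro w ⟨pa, hpa, rfl⟩; exact hwm_le_one pa hpa E⟩
  have habar_nonneg : ∀ E : Finset S, 0 ≤ abar P E := fun E =>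
    Real.sSup_nonneg (by rintro w ⟨pa, hpa, rfl⟩; exact hwm_nonneg pa hpa E)
  have hwm_le_abar : ∀ pa ∈ P, ∀ E : Finset S, pa.2 * mass pa.1 E ≤ abar P E :=
    fun pa hpa E => le_csSup (bddS E) ⟨pa, hpa, rfl⟩
  have hA12_le_A1 : abar P (E1 ∩ E2) ≤ abar P E1 := by
    apply Real.sSup_le _ (habar_nonneg E1)
    rintro w ⟨pa, hpa, rfl⟩
    calc pa.2 * mass pa.1 (E1 ∩ E2) ≤ pa.2 * mass pa.1 E1 :=
          mul_le_mul_of_nonneg_left (mass_mono' (hnn pa hpa) Finset.inter_subset_left)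
            (hP pa hpa).2.1
      _ ≤ abar P E1 := hwm_le_abar pa hpa E1
  have hA1pos : 0 < abar P E1 := lt_of_lt_of_le h hA12_le_A1
  have hA1ne : abar P E1 ≠ 0 := ne_of_gt hA1pos
  have hA12ne : abar P (E1 ∩ E2) ≠ 0 := ne_of_gt h
  -- nonnegativity / boundedness of the weight sets
  have hT_nonneg : ∀ f, ∀ w ∈ Tset P E1 f, 0 ≤ w := by
    rintro f w ⟨qb, hqb, -, rfl⟩
    exact div_nonneg (hwm_nonneg qb hqb E1) (habar_nonneg E1)
  have hT_le_one : ∀ f, ∀ w ∈ Tset P E1 f, w ≤ 1 := by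
    rintro f w ⟨qb, hqb, -, rfl⟩
    exact div_le_one_of_le₀ (le_trans (hwm_le_abar qb hqb E1) le_rfl) (habar_nonneg E1)
  have bddT : ∀ f, BddAbove (Tset P E1 f) := fun f => ⟨1, fun w hw => hT_le_one f w hw⟩
  have hT'_nonneg : ∀ f, ∀ w ∈ Tset P (E1 ∩ E2) f, 0 ≤ w := by
    rintro f w ⟨qb, hqb, -, rfl⟩
    exact div_nonneg (hwm_nonneg qb hqb _) (habar_nonneg _)
  have bddT' : ∀ f, BddAbove (Tset P (E1 ∩ E2) f) := fun f =>
    ⟨1, by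
      rintro w ⟨qb, hqb, -, rfl⟩
      exact div_le_one_of_le₀ (hwm_le_abar qb hqb _) (habar_nonneg _)⟩
  have bddT12 : ∀ f, BddAbove (T12set P E1 E2 f) := fun f =>
    ⟨abar P (E1 ∩ E2) / abar P E1, by
      rintro w ⟨qb, hqb, -, rfl⟩
      exact div_le_div_of_nonneg_right (hwm_le_abar qb hqb _) hA1pos.le⟩
  -- key pointwise identity
  have hK0 : ∀ f : S → ℝ, (∀ s, 0 ≤ f s) →
      sSup (T12set P E1 E2 f) = mass f E2 * sSup (Tset P E1 f) := by
    intro f hfnn0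
    have himg : T12set P E1 E2 f = (fun x => mass f E2 * x) '' (Tset P E1 f) := by
      ext w
      constructor
      · rintro ⟨qb, hqb, hcond, rfl⟩
        refine ⟨qb.2 * mass qb.1 E1 / abar P E1, ⟨qb, hqb, hcond, rfl⟩, ?_⟩
        have hm := mass_mul_mass_cond (hnn qb hqb) E1 E2
        rw [hcond] at hm
        rw [← hm]; ring
      · rintro ⟨x, ⟨qb, hqb, hcond, rfl⟩, rfl⟩
        refine ⟨qb, hqb, hcond, ?_⟩
        have hm := mass_mul_mass_cond (hnn qb hqb) E1 E2
        rw [hcond] at hm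
        rw [← hm]; ring
    rw [himg, sSup_mul_image _ (mass_nonneg' hfnn0 E2)]
  -- membership-shape facts about L1 := lupdate P E1
  have hmemL1 : ∀ qb ∈ lupdate P E1, (∃ p ∈ P, qb.1 = condProb p.1 E1) ∧
      qb.2 = sSup (Tset P E1 qb.1) := fun qb hqb => hqb
  have hL1_nonneg : ∀ qb ∈ lupdate P E1, (∀ s, 0 ≤ qb.1 s) ∧ 0 ≤ qb.2 := by
    intro qb hqb
    obtain ⟨⟨p, hp, hq1⟩, hq2⟩ := hmemL1 qb hqb
    refine ⟨?_, ?_⟩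
    · rw [hq1]; exact condProb_nonneg' (hnn p hp) E1
    · rw [hq2]; exact Real.sSup_nonneg (hT_nonneg qb.1)
  have hK0' : ∀ qb ∈ lupdate P E1,
      qb.2 * mass qb.1 E2 = sSup (T12set P E1 E2 qb.1) := by
    intro qb hqb
    obtain ⟨⟨p, hp, hq1⟩, hq2⟩ := hmemL1 qb hqb
    rw [hq2, hK0 qb.1 (hL1_nonneg qb hqb).1, mul_comm]
  -- computing abar of the updated family
  have hA2 : abar (lupdate P E1) E2 = abar P (E1 ∩ E2) / abar P E1 := by
    apply le_antisymm
    · apply Real.sSup_le _ (div_nonneg (habar_nonneg _) (habar_nonneg E1))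
      rintro w ⟨qb, hqb, rfl⟩
      rw [hK0' qb hqb]
      apply Real.sSup_le _ (div_nonneg (habar_nonneg _) (habar_nonneg E1))
      rintro w ⟨rb, hrb, -, rfl⟩
      exact div_le_div_of_nonneg_right (hwm_le_abar rb hrb _) hA1pos.le
    · rw [div_le_iff₀ hA1pos]
      apply Real.sSup_le
      · rintro w ⟨qb, hqb, rfl⟩
        have hmem12 : qb.2 * mass qb.1 (E1 ∩ E2) / abar P E1 ∈
            T12set P E1 E2 (condProb qb.1 E1) := ⟨qb, hqb, rfl, rfl⟩
        have hL1mem : (condProb qb.1 E1, sSup (Tset P E1 (condProb qb.1 E1))) ∈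
            lupdate P E1 := ⟨⟨qb, hqb, rfl⟩, rfl⟩
        have hle1 : qb.2 * mass qb.1 (E1 ∩ E2) / abar P E1 ≤
            sSup (T12set P E1 E2 (condProb qb.1 E1)) := le_csSup (bddT12 _) hmem12
        have hle2 : sSup (T12set P E1 E2 (condProb qb.1 E1)) ≤ abar (lupdate P E1) E2 := by
          rw [← hK0' _ hL1mem]
          refine le_csSup ?_ ⟨_, hL1mem, rfl⟩
          refine ⟨1, ?_⟩
          rintro w ⟨rb, hrb, rfl⟩
          obtain ⟨⟨p, hp, hr1⟩, hr2⟩ := hmemL1 rb hrb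
          have h1 : rb.2 ≤ 1 := by
            rw [hr2]; exact Real.sSup_le (hT_le_one rb.1) zero_le_one
          have h2 : mass rb.1 E2 ≤ 1 := by
            rw [hr1]; exact mass_condProb_le_one (hnn p hp) E1 E2
          exact mul_le_one₀ h1 (mass_nonneg' (hL1_nonneg rb hrb).1 E2) h2
        calc qb.2 * mass qb.1 (E1 ∩ E2)
            = qb.2 * mass qb.1 (E1 ∩ E2) / abar P E1 * abar P E1 := by
              rw [div_mul_cancel₀ _ hA1ne]
          _ ≤ abar (lupdate P E1) E2 * abar P E1 :=
              mul_le_mul_of_nonneg_right (le_trans hle1 hle2) (le_of_lt hA1pos)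
      · exact mul_nonneg
          (Real.sSup_nonneg (by
            rintro w ⟨qb, hqb, rfl⟩
            exact mul_nonneg (hL1_nonneg qb hqb).2
              (mass_nonneg' (hL1_nonneg qb hqb).1 E2)))
          (le_of_lt hA1pos)
  have hA2pos : 0 < abar (lupdate P E1) E2 := by
    rw [hA2]; exact div_pos h hA1pos
  have hA2ne : abar (lupdate P E1) E2 ≠ 0 := ne_of_gt hA2pos
  have hA1A2 : abar P E1 * abar (lupdate P E1) E2 = abar P (E1 ∩ E2) := by
    rw [hA2, mul_comm, div_mul_cancel₀ _ hA1ne]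
  -- the main sup identity
  have hsup : ∀ f : S → ℝ,
      sSup (Tset (lupdate P E1) E2 f) = sSup (Tset P (E1 ∩ E2) f) := by
    intro f
    have hptw : ∀ w ∈ Tset (lupdate P E1) E2 f, w ≤ sSup (Tset P (E1 ∩ E2) f) := by
      rintro w ⟨qb, hqb, hcond, rfl⟩
      rw [div_le_iff₀ hA2pos, hK0' qb hqb]
      apply Real.sSup_le
      · rintro w ⟨rb, hrb, hr1, rfl⟩
        have hmem' : rb.2 * mass rb.1 (E1 ∩ E2) / abar P (E1 ∩ E2) ∈
            Tset P (E1 ∩ E2) f := by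
          refine ⟨rb, hrb, ?_, rfl⟩
          rw [← condProb_condProb' (hnn rb hrb) E1 E2, hr1, hcond]
        calc rb.2 * mass rb.1 (E1 ∩ E2) / abar P E1
            = rb.2 * mass rb.1 (E1 ∩ E2) / abar P (E1 ∩ E2) * abar (lupdate P E1) E2 := by
              rw [← hA1A2]
              field_simp
          _ ≤ sSup (Tset P (E1 ∩ E2) f) * abar (lupdate P E1) E2 :=
              mul_le_mul_of_nonneg_right (le_csSup (bddT' f) hmem') (le_of_lt hA2pos)
      · exact mul_nonneg (Real.sSup_nonneg (hT'_nonneg f)) (le_of_lt hA2pos)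
    apply le_antisymm
    · exact Real.sSup_le hptw (Real.sSup_nonneg (hT'_nonneg f))
    · apply Real.sSup_le
      · rintro w ⟨qb, hqb, hcond, rfl⟩
        set q' : S → ℝ := condProb qb.1 E1 with hq'
        have hL1mem : (q', sSup (Tset P E1 q')) ∈ lupdate P E1 := ⟨⟨qb, hqb, rfl⟩, rfl⟩
        have hcond' : condProb q' E2 = f := by
          rw [hq', condProb_condProb' (hnn qb hqb) E1 E2, hcond]
        have hmemT12 : qb.2 * mass qb.1 (E1 ∩ E2) / abar P E1 ∈ T12set P E1 E2 q' :=
          ⟨qb, hqb, rfl, rfl⟩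
        have hmemOut : sSup (Tset P E1 q') * mass q' E2 / abar (lupdate P E1) E2 ∈
            Tset (lupdate P E1) E2 f := ⟨(q', sSup (Tset P E1 q')), hL1mem, hcond', rfl⟩
        have hle : qb.2 * mass qb.1 (E1 ∩ E2) / abar P (E1 ∩ E2) ≤
            sSup (Tset P E1 q') * mass q' E2 / abar (lupdate P E1) E2 := by
          have h12 : sSup (Tset P E1 q') * mass q' E2 = sSup (T12set P E1 E2 q') :=
            (hK0' (q', sSup (Tset P E1 q')) hL1mem)
          rw [h12]
          have : qb.2 * mass qb.1 (E1 ∩ E2) / abar P (E1 ∩ E2) =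
              qb.2 * mass qb.1 (E1 ∩ E2) / abar P E1 / abar (lupdate P E1) E2 := by
            rw [div_div, hA1A2]
          rw [this]
          exact div_le_div_of_nonneg_right (le_csSup (bddT12 q') hmemT12) hA2pos.le
        exact le_trans hle (le_csSup ⟨_, hptw⟩ hmemOut)
      · exact Real.sSup_nonneg (by
          rintro w hw
          obtain ⟨qb, hqb, -, rfl⟩ := hw
          exact div_nonneg
            (mul_nonneg (hL1_nonneg qb hqb).2 (mass_nonneg' (hL1_nonneg qb hqb).1 E2))
            (le_of_lt hA2pos))
  -- final set equality
  ext x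
  constructor
  · rintro ⟨⟨qb, hqb, hx1⟩, hx2⟩
    obtain ⟨⟨p, hp, hq1⟩, -⟩ := hmemL1 qb hqb
    refine ⟨⟨p, hp, ?_⟩, ?_⟩
    · rw [hx1, hq1, condProb_condProb' (hnn p hp) E1 E2]
    · rw [hx2]; exact hsup x.1
  · rintro ⟨⟨p, hp, hx1⟩, hx2⟩
    refine ⟨⟨(condProb p.1 E1, sSup (Tset P E1 (condProb p.1 E1))), ⟨⟨p, hp, rfl⟩, rfl⟩, ?_⟩, ?_⟩
    · rw [hx1, condProb_condProb' (hnn p hp) E1 E2]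
    · rw [hx2]; exact (hsup x.1).symm

/-- Likelihood updating is consistent: updating on `E1` then `E2` (in either
order) agrees with updating on `E1 ∩ E2`, provided ᾱ(E1 ∩ E2) > 0. -/
theorem likelihood_updating_consistent
    {S : Type*} [Fintype S] [DecidableEq S]
    (P : Set ((S → ℝ) × ℝ))
    (hP : ∀ pa ∈ P, IsProb pa.1 ∧ pa.2 ∈ Set.Icc (0:ℝ) 1)
    (huniq : ∀ pa ∈ P, ∀ qb ∈ P, pa.1 = qb.1 → pa.2 = qb.2)
    (E1 E2 : Finset S)
    (h : 0 < abar P (E1 ∩ E2)) :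
    lupdate (lupdate P E1) E2 = lupdate P (E1 ∩ E2) ∧
    lupdate (lupdate P E2) E1 = lupdate P (E1 ∩ E2) := by
  refine ⟨lupdate_lupdate P hP E1 E2 h, ?_⟩
  have h' : 0 < abar P (E2 ∩ E1) := by rwa [Finset.inter_comm]
  rw [Finset.inter_comm E1 E2]
  exact lupdate_lupdate P hP E2 E1 h'
end

section
/- Let B⁻ be the nonpositive functions on a finite set S, and let I : B⁻ → ℝ be monotone (b ≥ b' implies I(b) ≥ I(b')), positively homogeneous (I(cb) = cI(b) for c > 0), superadditive (I(b+b') ≥ I(b)+I(b')), continuous, with I(c·1) = c for all c ≤ 0. For each probability measure Pr on S define α_Pr = sup{α ∈ ℝ : α·E_Pr[b] ≥ I(b) for all b ∈ B⁻}. Then α_Pr ∈ [0,1] for every Pr, and α_Pr·E_Pr[b] ≥ I(b) for all b ∈ B⁻. -/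
open Finset

/-- The nonpositive functions on `S`. -/
def Bneg (S : Type*) : Set (S → ℝ) := {b | ∀ s, b s ≤ 0}

/-- The canonical weight of a probability measure `Pr`, defined from the
functional `I`. -/
noncomputable def alphaOf {S : Type*} [Fintype S]
    (I : (S → ℝ) → ℝ) (Pr : S → ℝ) : ℝ :=
  sSup {α : ℝ | ∀ b ∈ Bneg S, I b ≤ α * ∑ s, Pr s * b s}

/-- If `I` is monotone, positively homogeneous, superadditive, continuous on
`B⁻`, and satisfies `I(c·1) = c` for `c ≤ 0`, then for every probability
measure `Pr`, the weight `α_Pr ∈ [0,1]` and `α_Pr·E_Pr[b] ≥ I(b)` for all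
`b ∈ B⁻`. -/
theorem alphaOf_mem_Icc_and_dominates
    {S : Type*} [Fintype S] (I : (S → ℝ) → ℝ)
    (hmono : ∀ b ∈ Bneg S, ∀ b' ∈ Bneg S, (∀ s, b' s ≤ b s) → I b' ≤ I b)
    (hhomog : ∀ b ∈ Bneg S, ∀ c : ℝ, 0 < c → I (c • b) = c * I b)
    (hsuper : ∀ b ∈ Bneg S, ∀ b' ∈ Bneg S, I b + I b' ≤ I (b + b'))
    (hcont : ContinuousOn I (Bneg S))
    (hconst : ∀ c : ℝ, c ≤ 0 → I (fun _ => c) = c) :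
    ∀ Pr : S → ℝ, IsProb Pr →
      alphaOf I Pr ∈ Set.Icc (0:ℝ) 1 ∧
      ∀ b ∈ Bneg S, I b ≤ alphaOf I Pr * ∑ s, Pr s * b s := by
  intro Pr hPr
  set A : Set ℝ := {α : ℝ | ∀ b ∈ Bneg S, I b ≤ α * ∑ s, Pr s * b s} with hAdef
  have hzero : (0:ℝ) ∈ A := by
    intro b hb
    rw [zero_mul]
    calc I b ≤ I (fun _ => (0:ℝ)) := hmono _ (fun _ => le_rfl) b hb hb
      _ = 0 := hconst 0 le_rfl
  have hub : ∀ α ∈ A, α ≤ 1 := by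
    intro α hα
    have h := hα (fun _ => (-1:ℝ)) (fun _ => by norm_num)
    rw [hconst (-1) (by norm_num)] at h
    have hsum : ∑ s, Pr s * (-1:ℝ) = -1 := by
      simp [← Finset.sum_mul, hPr.2]
    rw [hsum] at h
    linarith
  have hbdd : BddAbove A := ⟨1, hub⟩
  have hclosed : IsClosed A := by
    have : A = ⋂ b ∈ Bneg S, {α : ℝ | I b ≤ α * ∑ s, Pr s * b s} := by
      ext α; simp [hAdef]
    rw [this]
    exact isClosed_biInter fun b _ =>
      isClosed_le continuous_const (continuous_id.mul continuous_const)
  have hmem : sSup A ∈ A := hclosed.csSup_mem ⟨0, hzero⟩ hbdd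
  refine ⟨⟨le_csSup hbdd hzero, csSup_le ⟨0, hzero⟩ hub⟩, hmem⟩
end

section
/- With I as in the canonical MWER construction (monotone, positively homogeneous, superadditive, continuous on B⁻, I(c·1) = c for c ≤ 0), for every b ∈ B⁻ there exists a probability measure Pr on S with α_Pr·E_Pr[b] = I(b), where α_Pr = sup{α : α·E_Pr[b'] ≥ I(b') for all b' ∈ B⁻}. Consequently I(b) = inf over probability measures Pr of α_Pr·E_Pr[b] for all b ∈ B⁻. -/
open Finset

private lemma aux_alpha {S : Type*} [Fintype S] (I : (S → ℝ) → ℝ)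
    (hmono : ∀ b ∈ Bneg S, ∀ b' ∈ Bneg S, (∀ s, b' s ≤ b s) → I b' ≤ I b)
    (hconst : ∀ c : ℝ, c ≤ 0 → I (fun _ => c) = c)
    (Pr : S → ℝ) (hPr : IsProb Pr) :
    BddAbove {α : ℝ | ∀ b ∈ Bneg S, I b ≤ α * ∑ s, Pr s * b s} ∧
    (∀ b ∈ Bneg S, I b ≤ alphaOf I Pr * ∑ s, Pr s * b s) := by
  classical
  set A := {α : ℝ | ∀ b ∈ Bneg S, I b ≤ α * ∑ s, Pr s * b s} with hA
  have hneg : ∀ b ∈ Bneg S, I b ≤ 0 := by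
    intro b hb
    have h0 : (fun _ : S => (0:ℝ)) ∈ Bneg S := fun s => le_rfl
    have := hmono _ h0 b hb (fun s => hb s)
    rwa [hconst 0 le_rfl] at this
  have h0A : (0:ℝ) ∈ A := by
    intro b hb
    rw [zero_mul]; exact hneg b hb
  obtain ⟨s0, hs0⟩ : ∃ s0, 0 < Pr s0 := by
    by_contra h
    push_neg at h
    have : ∑ s, Pr s = 0 := Finset.sum_eq_zero fun s _ => le_antisymm (h s) (hPr.1 s)
    rw [hPr.2] at this; norm_num at this
  have hbdd : BddAbove A := by
    refine ⟨1 / Pr s0, ?_⟩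
    intro α hα
    have hb'mem : (fun s => if s = s0 then (-1:ℝ) else 0) ∈ Bneg S := by
      intro s; by_cases h : s = s0 <;> simp [h]
    have hsum : ∑ s, Pr s * (if s = s0 then (-1:ℝ) else 0) = -Pr s0 := by
      simp only [mul_ite, mul_neg_one, mul_zero]
      rw [Finset.sum_ite_eq' Finset.univ s0]
      simp
    have h1 : (-1:ℝ) ≤ I (fun s => if s = s0 then (-1:ℝ) else 0) := by
      have hc : (fun _ : S => (-1:ℝ)) ∈ Bneg S := fun s => by norm_num
      have := hmono _ hb'mem _ hc (fun s => by by_cases h : s = s0 <;> simp [h])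
      rwa [hconst (-1) (by norm_num)] at this
    have h2 := hα _ hb'mem
    rw [hsum] at h2
    rw [le_div_iff₀ hs0]
    nlinarith
  have hclosed : IsClosed A := by
    have hAeq : A = ⋂ b ∈ Bneg S, {α : ℝ | I b ≤ α * ∑ s, Pr s * b s} := by
      ext α; simp [hA, Set.mem_iInter]
    rw [hAeq]
    exact isClosed_biInter fun b _ =>
      isClosed_le continuous_const (continuous_id.mul continuous_const)
  have hmem : sSup A ∈ A := hclosed.csSup_mem ⟨0, h0A⟩ hbdd
  refine ⟨hbdd, ?_⟩
  have halpha : alphaOf I Pr = sSup A := by unfold alphaOf; rw [← hA]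
  rw [halpha]
  exact hmem

set_option maxHeartbeats 1000000 in
/-- For every `b ∈ B⁻` there is a probability measure `Pr` with
`α_Pr·E_Pr[b] = I(b)`; consequently `I(b)` is the infimum over probability
measures of `α_Pr·E_Pr[b]`. -/
theorem exists_prob_attaining_and_inf_repr
    {S : Type*} [Fintype S] (I : (S → ℝ) → ℝ)
    (hmono : ∀ b ∈ Bneg S, ∀ b' ∈ Bneg S, (∀ s, b' s ≤ b s) → I b' ≤ I b)
    (hhomog : ∀ b ∈ Bneg S, ∀ c : ℝ, 0 < c → I (c • b) = c * I b)
    (hsuper : ∀ b ∈ Bneg S, ∀ b' ∈ Bneg S, I b + I b' ≤ I (b + b'))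
    (hcont : ContinuousOn I (Bneg S))
    (hconst : ∀ c : ℝ, c ≤ 0 → I (fun _ => c) = c) :
    (∀ b ∈ Bneg S, ∃ Pr : S → ℝ, IsProb Pr ∧
        alphaOf I Pr * ∑ s, Pr s * b s = I b) ∧
    (∀ b ∈ Bneg S,
        I b = sInf {r : ℝ | ∃ Pr : S → ℝ, IsProb Pr ∧
          r = alphaOf I Pr * ∑ s, Pr s * b s}) := by
  classical
  have hneg : ∀ b ∈ Bneg S, I b ≤ 0 := by
    intro b hb
    have h0 : (fun _ : S => (0:ℝ)) ∈ Bneg S := fun s => le_rfl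
    have := hmono _ h0 b hb (fun s => hb s)
    rwa [hconst 0 le_rfl] at this
  rcases isEmpty_or_nonempty S with hS | hS
  · exfalso
    have h01 : (0:ℝ) = -1 := by
      calc (0:ℝ) = I (fun _ => 0) := (hconst 0 le_rfl).symm
        _ = I (fun _ => -1) := by congr 1; exact funext fun s => hS.elim s
        _ = -1 := hconst (-1) (by norm_num)
    norm_num at h01
  have main : ∀ b ∈ Bneg S, ∃ Pr : S → ℝ, IsProb Pr ∧
      alphaOf I Pr * ∑ s, Pr s * b s = I b := by
    intro b hb
    rcases lt_or_eq_of_le (hneg b hb) with hlt | heq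
    · -- case I b < 0
      -- concavity
      have hconc : ∀ b₁ ∈ Bneg S, ∀ b₂ ∈ Bneg S, ∀ a c : ℝ, 0 ≤ a → 0 ≤ c → a + c = 1 →
          a * I b₁ + c * I b₂ ≤ I (a • b₁ + c • b₂) := by
        intro b₁ h₁ b₂ h₂ a c ha hc hac
        rcases eq_or_lt_of_le ha with rfl | ha'
        · have hc1 : c = 1 := by linarith
          subst hc1; simp
        rcases eq_or_lt_of_le hc with rfl | hc'
        · have ha1 : a = 1 := by linarith
          subst ha1; simp
        have hm1 : a • b₁ ∈ Bneg S := fun s => by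
          simp only [Pi.smul_apply, smul_eq_mul]; nlinarith [h₁ s]
        have hm2 : c • b₂ ∈ Bneg S := fun s => by
          simp only [Pi.smul_apply, smul_eq_mul]; nlinarith [h₂ s]
        calc a * I b₁ + c * I b₂ = I (a • b₁) + I (c • b₂) := by
              rw [hhomog b₁ h₁ a ha', hhomog b₂ h₂ c hc']
          _ ≤ I (a • b₁ + c • b₂) := hsuper _ hm1 _ hm2
      set V : Set (S → ℝ) := {x | ∃ b', b' ∈ Bneg S ∧ I b < I b' ∧ ∀ s, b' s < x s} with hV
      have hVopen : IsOpen V := by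
        have hVeq : V = ⋃ c ∈ {c : S → ℝ | c ∈ Bneg S ∧ I b < I c}, {x | ∀ s, c s < x s} := by
          ext x
          simp only [hV, Set.mem_setOf_eq, Set.mem_iUnion, exists_prop]
          tauto
        rw [hVeq]
        refine isOpen_biUnion fun c _ => ?_
        have : {x : S → ℝ | ∀ s, c s < x s} = ⋂ s, {x : S → ℝ | c s < x s} := by
          ext x; simp
        rw [this]
        exact isOpen_iInter_of_finite fun s => isOpen_lt continuous_const (continuous_apply s)
      have hVconv : Convex ℝ V := by
        rintro x ⟨b₁, hb₁, hI₁, hx₁⟩ y ⟨b₂, hb₂, hI₂, hx₂⟩ a c ha hc hac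
        rcases eq_or_lt_of_le ha with rfl | ha'
        · have hc1 : c = 1 := by linarith
          subst hc1; simpa using ⟨b₂, hb₂, hI₂, hx₂⟩
        rcases eq_or_lt_of_le hc with rfl | hc'
        · have ha1 : a = 1 := by linarith
          subst ha1; simpa using ⟨b₁, hb₁, hI₁, hx₁⟩
        refine ⟨a • b₁ + c • b₂, fun s => ?_, ?_, fun s => ?_⟩
        · simp only [Pi.add_apply, Pi.smul_apply, smul_eq_mul]
          nlinarith [hb₁ s, hb₂ s]
        · have h1 := hconc b₁ hb₁ b₂ hb₂ a c ha hc hac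
          have h2 : a * I b < a * I b₁ := mul_lt_mul_of_pos_left hI₁ ha'
          have h3 : c * I b < c * I b₂ := mul_lt_mul_of_pos_left hI₂ hc'
          have h4 : a * I b + c * I b = I b := by
            calc a * I b + c * I b = (a + c) * I b := by ring
              _ = I b := by rw [hac, one_mul]
          linarith
        · simp only [Pi.add_apply, Pi.smul_apply, smul_eq_mul]
          have h2 := mul_lt_mul_of_pos_left (hx₁ s) ha'
          have h3 := mul_lt_mul_of_pos_left (hx₂ s) hc'
          linarith
      have hbV : b ∉ V := by
        rintro ⟨b', hb', hI', hlt'⟩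
        exact absurd (hmono b hb b' hb' fun s => (hlt' s).le) (not_le.mpr hI')
      obtain ⟨f, hf⟩ := geometric_hahn_banach_open_point hVconv hVopen hbV
      obtain ⟨q, hq⟩ : ∃ q : S → ℝ, ∀ s, q s = -f (Pi.single s 1) :=
        ⟨fun s => -f (Pi.single s 1), fun _ => rfl⟩
      have hkey : ∀ x : S → ℝ, f x = ∑ s, x s * f (Pi.single s 1) := by
        intro x
        conv_lhs => rw [← Finset.univ_sum_single x]
        rw [map_sum]
        refine Finset.sum_congr rfl fun s _ => ?_
        have hsing : (Pi.single s (x s) : S → ℝ) = x s • (Pi.single s 1 : S → ℝ) := by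
          funext t
          rcases eq_or_ne t s with rfl | h
          · simp
          · simp [Pi.single_apply, h]
        rw [hsing, map_smul, smul_eq_mul]
      have hg : ∀ x : S → ℝ, ∑ s, q s * x s = -f x := by
        intro x
        rw [hkey x, ← Finset.sum_neg_distrib]
        exact Finset.sum_congr rfl fun s _ => by rw [hq s]; ring
      have hsep : ∀ x ∈ V, (∑ s, q s * b s) < ∑ s, q s * x s := by
        intro x hx
        have h := hf x hx
        rw [hg, hg]
        linarith
      -- auxiliary facts about b
      have hsumnn : (0:ℝ) ≤ ∑ s', -b s' := Finset.sum_nonneg fun s _ => neg_nonneg.mpr (hb s)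
      have hMsum : ∀ s, -b s ≤ ∑ s', -b s' := fun s =>
        Finset.single_le_sum (fun s' _ => neg_nonneg.mpr (hb s')) (Finset.mem_univ s)
      have ht1pos : (0:ℝ) < (∑ s', -b s') + 1 := by linarith
      have hhalf : ((1:ℝ)/2) • b ∈ Bneg S := fun s => by
        simp only [Pi.smul_apply, smul_eq_mul]; linarith [hb s]
      have hIhalf : I (((1:ℝ)/2) • b) = (1/2) * I b := hhomog b hb (1/2) (by norm_num)
      have hx1pt : ∀ s, ((1:ℝ)/2) * b s < b s + ((∑ s', -b s') + 1) := by
        intro s; have := hMsum s; linarith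
      -- positivity of total mass of q
      have hSigpos : 0 < ∑ s, q s := by
        have hx1 : (fun s => b s + ((∑ s', -b s') + 1)) ∈ V := by
          refine ⟨((1:ℝ)/2) • b, hhalf, by rw [hIhalf]; linarith, fun s => ?_⟩
          simp only [Pi.smul_apply, smul_eq_mul]
          exact hx1pt s
        have h := hsep _ hx1
        have hexp : ∑ s, q s * (b s + ((∑ s', -b s') + 1))
            = (∑ s, q s * b s) + ((∑ s', -b s') + 1) * ∑ s, q s := by
          simp only [mul_add, Finset.sum_add_distrib]
          rw [← Finset.sum_mul]
          ring
        rw [hexp] at h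
        by_contra hcon
        push_neg at hcon
        nlinarith [mul_nonneg ht1pos.le (neg_nonneg.mpr hcon)]
      have hstar : ∀ b' ∈ Bneg S, I b < I b' → (∑ s, q s * b s) ≤ ∑ s, q s * b' s := by
        intro b' hb' hI'
        refine le_of_forall_pos_le_add fun ε hε => ?_
        have hδ : 0 < ε / ∑ s', q s' := div_pos hε hSigpos
        have hx : (fun s => b' s + ε / ∑ s', q s') ∈ V := ⟨b', hb', hI', fun s => by linarith⟩
        have h := hsep _ hx
        have hexp : ∑ s, q s * (b' s + ε / ∑ s', q s') = (∑ s, q s * b' s) + ε := by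
          simp only [mul_add, Finset.sum_add_distrib]
          congr 1
          rw [← Finset.sum_mul]
          field_simp
        rw [hexp] at h
        linarith
      have hstar2 : ∀ b' ∈ Bneg S, I b ≤ I b' → (∑ s, q s * b s) ≤ ∑ s, q s * b' s := by
        intro b' hb' hI'
        refine le_of_forall_pos_le_add fun ε hε => ?_
        set G := ∑ s, q s * b' s with hG
        set η : ℝ := min (1/2) (ε / (|G| + 1)) with hη
        have habs : 0 ≤ |G| := abs_nonneg G
        have hη0 : 0 < η := lt_min (by norm_num) (div_pos hε (by linarith))
        have hη1 : η < 1 := lt_of_le_of_lt (min_le_left _ _) (by norm_num)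
        have hmem1 : (1 - η) • b' ∈ Bneg S := fun s => by
          simp only [Pi.smul_apply, smul_eq_mul]
          nlinarith [hb' s]
        have hIs : I ((1 - η) • b') = (1 - η) * I b' := hhomog b' hb' _ (by linarith)
        have hIlt : I b < I ((1 - η) • b') := by
          rw [hIs]
          nlinarith [mul_le_mul_of_nonneg_left hI' (by linarith : (0:ℝ) ≤ 1 - η),
            mul_pos hη0 (neg_pos.mpr hlt)]
        have h := hstar _ hmem1 hIlt
        have hexp : ∑ s, q s * ((1 - η) • b') s = (1 - η) * G := by
          rw [hG, Finset.mul_sum]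
          exact Finset.sum_congr rfl fun s _ => by
            simp only [Pi.smul_apply, smul_eq_mul]; ring
        rw [hexp] at h
        have hle : η ≤ ε / (|G| + 1) := min_le_right _ _
        have h2 : η * (|G| + 1) ≤ ε := by
          rw [← le_div_iff₀ (by linarith : (0:ℝ) < |G| + 1)]
          exact hle
        nlinarith [mul_le_mul_of_nonneg_left (neg_le_abs G) hη0.le]
      -- nonnegativity of q
      have hqnn : ∀ s, 0 ≤ q s := by
        intro s
        by_contra hqs
        push_neg at hqs
        obtain ⟨T, hT⟩ : ∃ T : ℝ, T = ((((∑ s', -b s') + 1)) * (∑ s', q s') + 1) / (-q s) :=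
          ⟨_, rfl⟩
        have hTnum : 0 < (((∑ s', -b s') + 1)) * (∑ s', q s') + 1 := by
          nlinarith [mul_pos ht1pos hSigpos]
        have hTpos : 0 < T := hT ▸ div_pos hTnum (neg_pos.mpr hqs)
        have hx : (fun s' => b s' + ((∑ s'', -b s'') + 1) + T * (if s' = s then 1 else 0)) ∈ V := by
          refine ⟨((1:ℝ)/2) • b, hhalf, by rw [hIhalf]; linarith, fun s' => ?_⟩
          simp only [Pi.smul_apply, smul_eq_mul]
          have h1 := hx1pt s'
          have h2 : 0 ≤ T * (if s' = s then (1:ℝ) else 0) := by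
            split <;> nlinarith
          linarith
        have h := hsep _ hx
        have hexp : ∑ s', q s' * (b s' + ((∑ s'', -b s'') + 1) + T * (if s' = s then 1 else 0))
            = (∑ s', q s' * b s') + ((∑ s'', -b s'') + 1) * (∑ s', q s') + T * q s := by
          simp only [mul_add, Finset.sum_add_distrib, mul_ite, mul_one, mul_zero]
          rw [Finset.sum_ite_eq' Finset.univ s, ← Finset.sum_mul]
          simp [mul_comm]
          ring
        rw [hexp] at h
        have hqs0 : q s ≠ 0 := ne_of_lt hqs
        have hTq : T * q s = -((((∑ s', -b s') + 1)) * (∑ s', q s') + 1) := by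
          rw [hT, div_mul_eq_mul_div, div_neg, mul_div_assoc, div_self hqs0, mul_one]
        rw [hTq] at h
        linarith
      have hgb_le : (∑ s, q s * b s) ≤ 0 :=
        Finset.sum_nonpos fun s _ => mul_nonpos_iff.mpr (Or.inl ⟨hqnn s, hb s⟩)
      have hgb_neg : (∑ s, q s * b s) < 0 := by
        rcases lt_or_eq_of_le hgb_le with h | h
        · exact h
        exfalso
        have hql : ∀ s, q s ≤ 0 := by
          intro s
          have ht0pos : (0:ℝ) < -I b / 4 := by linarith
          have hb''mem : (fun s' => (1/2) * b s' + (-(-I b / 4)) * (if s' = s then 1 else 0))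
              ∈ Bneg S := fun s' => by
            by_cases hss : s' = s <;> simp [hss] <;> nlinarith [hb s', hb s, hlt]
          have hIb'' : I b < I (fun s' => (1/2) * b s' + (-(-I b / 4)) * (if s' = s then 1 else 0)) := by
            have hpart : (fun s' => (-(-I b / 4)) * (if s' = s then (1:ℝ) else 0)) ∈ Bneg S :=
              fun s' => by by_cases hss : s' = s <;> simp [hss] <;> nlinarith [hlt]
            have hsplit : (fun s' => (1/2) * b s' + (-(-I b / 4)) * (if s' = s then (1:ℝ) else 0))
                = ((1:ℝ)/2) • b + (fun s' => (-(-I b / 4)) * (if s' = s then (1:ℝ) else 0)) := by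
              funext s'
              simp [Pi.smul_apply, smul_eq_mul]
            have h1 := hsuper _ hhalf _ hpart
            have h2 : -(-I b / 4) ≤ I (fun s' => (-(-I b / 4)) * (if s' = s then (1:ℝ) else 0)) := by
              have hc : (fun _ : S => -(-I b / 4)) ∈ Bneg S := fun _ => by linarith
              have := hmono _ hpart _ hc (fun s' => by
                by_cases hss : s' = s <;> simp [hss] <;> nlinarith [hlt])
              rwa [hconst (-(-I b / 4)) (by linarith)] at this
            rw [hsplit]
            rw [hIhalf] at h1
            linarith
          have hs := hstar _ hb''mem hIb''
          have hexp : ∑ s', q s' * ((1/2) * b s' + (-(-I b / 4)) * (if s' = s then 1 else 0))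
              = (1/2) * (∑ s', q s' * b s') + (-(-I b / 4)) * q s := by
            have e1 : ∀ s', q s' * ((1/2) * b s' + (-(-I b / 4)) * (if s' = s then 1 else 0))
                = (1/2) * (q s' * b s') + (if s' = s then (-(-I b / 4)) * q s' else 0) := by
              intro s'; split <;> ring
            rw [Finset.sum_congr rfl fun s' _ => e1 s', Finset.sum_add_distrib,
              Finset.sum_ite_eq' Finset.univ s, ← Finset.mul_sum]
            simp
          rw [hexp, h] at hs
          by_contra hpos
          push_neg at hpos
          nlinarith [mul_pos ht0pos hpos]
        have hsum0 : (∑ s, q s) ≤ 0 := Finset.sum_nonpos fun s _ => hql s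
        linarith
      -- the scaled vector and the probability
      have hα'pos : 0 < I b / (∑ s, q s * b s) := by
        rw [div_pos_iff]; right; exact ⟨hlt, hgb_neg⟩
      obtain ⟨α', hα'⟩ : ∃ a : ℝ, a = I b / (∑ s, q s * b s) := ⟨_, rfl⟩
      rw [← hα'] at hα'pos
      have hαb0 : α' * (∑ s, q s * b s) = I b := by
        rw [hα', div_mul_cancel₀ _ (ne_of_lt hgb_neg)]
      obtain ⟨T, hTdef⟩ : ∃ T : ℝ, T = α' * ∑ s, q s := ⟨_, rfl⟩
      have hTpos : 0 < T := hTdef ▸ mul_pos hα'pos hSigpos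
      obtain ⟨Pr, hPrdef⟩ : ∃ Pr : S → ℝ, ∀ s, Pr s = α' * q s / T :=
        ⟨fun s => α' * q s / T, fun _ => rfl⟩
      have hPrProb : IsProb Pr := by
        constructor
        · intro s
          rw [hPrdef s]
          exact div_nonneg (mul_nonneg hα'pos.le (hqnn s)) hTpos.le
        · rw [show ∑ s, Pr s = ∑ s, α' * q s / T from
            Finset.sum_congr rfl fun s _ => hPrdef s]
          rw [← Finset.sum_div, ← Finset.mul_sum, ← hTdef, div_self hTpos.ne']
      have hE : ∀ x : S → ℝ, ∑ s, Pr s * x s = (α' / T) * ∑ s, q s * x s := by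
        intro x
        rw [Finset.mul_sum]
        exact Finset.sum_congr rfl fun s _ => by rw [hPrdef s]; ring
      have hkey2 : ∀ b' ∈ Bneg S, I b' ≤ α' * ∑ s, q s * b' s := by
        intro b' hb'
        rcases lt_or_eq_of_le (hneg b' hb') with hIb' | hIb'
        · -- I b' < 0
          have htpos : 0 < I b / I b' := by
            rw [div_pos_iff]; right; exact ⟨hlt, hIb'⟩
          have htb' : (I b / I b') • b' ∈ Bneg S := fun s => by
            simp only [Pi.smul_apply, smul_eq_mul]
            nlinarith [hb' s]
          have hIt : I ((I b / I b') • b') = I b := by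
            rw [hhomog b' hb' _ htpos, div_mul_cancel₀ _ (ne_of_lt hIb')]
          have h := hstar2 _ htb' hIt.ge
          have hexp : ∑ s, q s * ((I b / I b') • b') s = (I b / I b') * ∑ s, q s * b' s := by
            rw [Finset.mul_sum]
            exact Finset.sum_congr rfl fun s _ => by
              simp only [Pi.smul_apply, smul_eq_mul]; ring
          rw [hexp] at h
          have hbne : I b ≠ 0 := ne_of_lt hlt
          have hb'ne : I b' ≠ 0 := ne_of_lt hIb'
          have hpos' : 0 ≤ I b' / I b := le_of_lt (by rw [div_pos_iff]; right; exact ⟨hIb', hlt⟩)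
          have h5 : (I b' / I b) * (∑ s, q s * b s)
              ≤ (I b' / I b) * ((I b / I b') * ∑ s, q s * b' s) :=
            mul_le_mul_of_nonneg_left h hpos'
          have h6 : (I b' / I b) * ((I b / I b') * ∑ s, q s * b' s) = ∑ s, q s * b' s := by
            field_simp
          have h7 : α' * ((I b' / I b) * (∑ s, q s * b s)) = I b' := by
            rw [mul_left_comm, hαb0, div_mul_cancel₀ _ hbne]
          have h8 := mul_le_mul_of_nonneg_left (h5.trans h6.le) hα'pos.le
          rw [h7] at h8
          exact h8
        · -- I b' = 0
          have hge : 0 ≤ ∑ s, q s * b' s := by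
            by_contra hc
            push_neg at hc
            have htpos : 0 < 2 * (∑ s, q s * b s) / (∑ s, q s * b' s) := by
              rw [div_pos_iff]; right; constructor <;> nlinarith
            have htb' : (2 * (∑ s, q s * b s) / (∑ s, q s * b' s)) • b' ∈ Bneg S := fun s => by
              simp only [Pi.smul_apply, smul_eq_mul]
              nlinarith [hb' s]
            have hIt : I b < I ((2 * (∑ s, q s * b s) / (∑ s, q s * b' s)) • b') := by
              rw [hhomog b' hb' _ htpos, hIb', mul_zero]
              exact hlt
            have h := hstar _ htb' hIt
            have hexp : ∑ s, q s * ((2 * (∑ s', q s' * b s') / (∑ s', q s' * b' s')) • b') s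
                = (2 * (∑ s', q s' * b s') / (∑ s', q s' * b' s')) * ∑ s, q s * b' s := by
              rw [Finset.sum_congr rfl fun s (_ : s ∈ Finset.univ) =>
                (by simp only [Pi.smul_apply, smul_eq_mul]; ring :
                  q s * ((2 * (∑ s', q s' * b s') / (∑ s', q s' * b' s')) • b') s
                  = (2 * (∑ s', q s' * b s') / (∑ s', q s' * b' s')) * (q s * b' s)),
                ← Finset.mul_sum]
            rw [hexp] at h
            have heq2 : (2 * (∑ s', q s' * b s') / (∑ s', q s' * b' s')) * (∑ s, q s * b' s)
                = 2 * ∑ s, q s * b s := by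
              rw [div_mul_eq_mul_div, mul_div_assoc, div_self (ne_of_lt hc), mul_one]
            rw [heq2] at h
            linarith
          have hle : ∑ s, q s * b' s ≤ 0 :=
            Finset.sum_nonpos fun s _ => mul_nonpos_iff.mpr (Or.inl ⟨hqnn s, hb' s⟩)
          have h0 : ∑ s, q s * b' s = 0 := le_antisymm hle hge
          rw [h0, mul_zero, hIb']
      have hTmem : T ∈ {α : ℝ | ∀ b' ∈ Bneg S, I b' ≤ α * ∑ s, Pr s * b' s} := by
        intro b' hb'
        have hk := hkey2 b' hb'
        rw [hE b']
        have heq3 : T * ((α' / T) * ∑ s, q s * b' s) = α' * ∑ s, q s * b' s := by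
          field_simp
        rw [heq3]
        exact hk
      obtain ⟨hbdd, hsupmem⟩ := aux_alpha I hmono hconst Pr hPrProb
      have hαge : T ≤ alphaOf I Pr := le_csSup hbdd hTmem
      have hEb : ∑ s, Pr s * b s = I b / T := by
        rw [hE b, div_mul_eq_mul_div, hαb0]
      have hEb_neg : ∑ s, Pr s * b s < 0 := by
        rw [hEb]; exact div_neg_of_neg_of_pos hlt hTpos
      refine ⟨Pr, hPrProb, ?_⟩
      have h1 : I b ≤ alphaOf I Pr * ∑ s, Pr s * b s := hsupmem b hb
      have h2 : alphaOf I Pr * ∑ s, Pr s * b s ≤ T * ∑ s, Pr s * b s :=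
        mul_le_mul_of_nonpos_right hαge hEb_neg.le
      have h3 : T * ∑ s, Pr s * b s = I b := by
        rw [hEb, mul_comm, div_mul_cancel₀ _ hTpos.ne']
      linarith
    · -- case I b = 0
      obtain ⟨s0, -, hs0⟩ := Finset.exists_max_image (Finset.univ : Finset S) b
        ⟨Classical.arbitrary S, Finset.mem_univ _⟩
      have hbs0 : b s0 = 0 := by
        by_contra hne
        have hlt0 : b s0 < 0 := lt_of_le_of_ne (hb s0) hne
        have hcm : (fun _ : S => b s0) ∈ Bneg S := fun s => le_of_lt hlt0
        have hmb := hmono _ hcm b hb (fun s => hs0 s (Finset.mem_univ s))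
        rw [hconst (b s0) (le_of_lt hlt0)] at hmb
        rw [heq] at hmb
        linarith
      refine ⟨fun s => if s = s0 then 1 else 0,
        ⟨fun s => by by_cases h : s = s0 <;> simp [h], by
          rw [Finset.sum_ite_eq' Finset.univ s0]; simp⟩, ?_⟩
      have hsum : ∑ s, (if s = s0 then (1:ℝ) else 0) * b s = b s0 := by
        simp only [ite_mul, one_mul, zero_mul]
        rw [Finset.sum_ite_eq' Finset.univ s0]
        simp
      rw [hsum, hbs0, mul_zero]
      exact heq.symm
  refine ⟨main, ?_⟩
  intro b hb
  obtain ⟨Pr0, hPr0, hval⟩ := main b hb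
  have hmemR : I b ∈ {r : ℝ | ∃ Pr : S → ℝ, IsProb Pr ∧ r = alphaOf I Pr * ∑ s, Pr s * b s} :=
    ⟨Pr0, hPr0, hval.symm⟩
  have hlb : ∀ r ∈ {r : ℝ | ∃ Pr : S → ℝ, IsProb Pr ∧ r = alphaOf I Pr * ∑ s, Pr s * b s},
      I b ≤ r := by
    rintro r ⟨Pr, hPr, rfl⟩
    exact (aux_alpha I hmono hconst Pr hPr).2 b hb
  exact le_antisymm (le_csInf ⟨_, hmemR⟩ hlb) (csInf_le ⟨I b, hlb⟩ hmemR)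
end

section
/- Let P⁺ = {(Pr, α_Pr)} be the canonical weighted set of probability measures defined by α_Pr = sup{α : α·E_Pr[b] ≥ I(b) for all b ∈ B⁻}, where I is monotone, positively homogeneous, superadditive and continuous on B⁻. Then the associated set of sub-probability measures C(P⁺) = {p : 0 ≤ p ≤ α_Pr·Pr for some Pr} is regular: it is convex, closed, and downward-closed (if p ∈ C(P⁺) and 0 ≤ q ≤ p then q ∈ C(P⁺)). -/
open Finset

/-- The set of sub-probability measures associated with the canonical
weighted set `P⁺`: all `p` with `0 ≤ p ≤ α_Pr·Pr` for some probability `Pr`. -/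
noncomputable def CofP {S : Type*} [Fintype S] (I : (S → ℝ) → ℝ) : Set (S → ℝ) :=
  {p | (∀ s, 0 ≤ p s) ∧ ∃ Pr : S → ℝ, IsProb Pr ∧ ∀ s, p s ≤ alphaOf I Pr * Pr s}

section Aux

variable {S : Type*} [Fintype S] {I : (S → ℝ) → ℝ}

lemma Inonpos (hmono : ∀ b ∈ Bneg S, ∀ b' ∈ Bneg S, (∀ s, b' s ≤ b s) → I b' ≤ I b)
    (hconst : ∀ c : ℝ, c ≤ 0 → I (fun _ => c) = c) {b : S → ℝ} (hb : b ∈ Bneg S) :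
    I b ≤ 0 := by
  have h0 : (fun _ : S => (0:ℝ)) ∈ Bneg S := fun s => le_rfl
  have := hmono _ h0 b hb hb
  rwa [hconst 0 le_rfl] at this

lemma alpha_key (hmono : ∀ b ∈ Bneg S, ∀ b' ∈ Bneg S, (∀ s, b' s ≤ b s) → I b' ≤ I b)
    (hconst : ∀ c : ℝ, c ≤ 0 → I (fun _ => c) = c)
    {Pr : S → ℝ} (hPr : IsProb Pr) :
    0 ≤ alphaOf I Pr ∧ (∀ b ∈ Bneg S, I b ≤ alphaOf I Pr * ∑ s, Pr s * b s) := by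
  set A : Set ℝ := {α : ℝ | ∀ b ∈ Bneg S, I b ≤ α * ∑ s, Pr s * b s} with hA
  have h0A : (0:ℝ) ∈ A := by
    intro b hb
    simpa using Inonpos hmono hconst hb
  have hbdd : BddAbove A := by
    refine ⟨1, fun α hα => ?_⟩
    have h1 : (fun _ : S => (-1:ℝ)) ∈ Bneg S := fun s => by norm_num
    have := hα _ h1
    rw [hconst (-1) (by norm_num)] at this
    have hsum : ∑ s, Pr s * (-1:ℝ) = -1 := by
      rw [← Finset.sum_mul, hPr.2]; ring
    rw [hsum] at this
    linarith
  have hsupmem : ∀ b ∈ Bneg S, I b ≤ alphaOf I Pr * ∑ s, Pr s * b s := by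
    intro b hb
    set c : ℝ := ∑ s, Pr s * b s with hc
    have hcle : c ≤ 0 :=
      Finset.sum_nonpos fun s _ => mul_nonpos_of_nonneg_of_nonpos (hPr.1 s) (hb s)
    rcases lt_or_eq_of_le hcle with hlt | heq
    · have hle : alphaOf I Pr ≤ I b / c := by
        apply csSup_le ⟨0, h0A⟩
        intro α hα
        have := hα b hb
        rw [le_div_iff_of_neg hlt]
        linarith [hα b hb]
      have := mul_le_mul_of_nonpos_right hle (le_of_lt hlt)
      rw [div_mul_cancel₀ _ (ne_of_lt hlt)] at this
      linarith
    · rw [heq, mul_zero]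
      exact Inonpos hmono hconst hb
  exact ⟨le_csSup hbdd h0A, hsupmem⟩

/-- The dual characterization set. -/
def Dset {S : Type*} [Fintype S] (I : (S → ℝ) → ℝ) : Set (S → ℝ) :=
  {p | (∀ s, 0 ≤ p s) ∧ ∀ b ∈ Bneg S, I b ≤ ∑ s, p s * b s}

lemma CofP_eq_Dset [Nonempty S]
    (hmono : ∀ b ∈ Bneg S, ∀ b' ∈ Bneg S, (∀ s, b' s ≤ b s) → I b' ≤ I b)
    (hconst : ∀ c : ℝ, c ≤ 0 → I (fun _ => c) = c) :
    CofP I = Dset I := by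
  ext p
  constructor
  · rintro ⟨hp0, Pr, hPr, hple⟩
    refine ⟨hp0, fun b hb => ?_⟩
    obtain ⟨_, hkey⟩ := alpha_key hmono hconst hPr
    calc I b ≤ alphaOf I Pr * ∑ s, Pr s * b s := hkey b hb
      _ = ∑ s, alphaOf I Pr * Pr s * b s := by rw [Finset.mul_sum]; congr 1; ext s; ring
      _ ≤ ∑ s, p s * b s :=
          Finset.sum_le_sum fun s _ => mul_le_mul_of_nonpos_right (hple s) (hb s)
  · rintro ⟨hp0, hdual⟩
    refine ⟨hp0, ?_⟩
    set m : ℝ := ∑ s, p s with hm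
    have hm0 : 0 ≤ m := Finset.sum_nonneg fun s _ => hp0 s
    rcases eq_or_lt_of_le hm0 with heq | hlt
    · -- p = 0; use uniform Pr
      have hpz : ∀ s, p s = 0 := by
        intro s
        have := Finset.sum_eq_zero_iff_of_nonneg (fun s _ => hp0 s) |>.mp heq.symm
        exact this s (Finset.mem_univ s)
      set Pr : S → ℝ := fun _ => (Fintype.card S : ℝ)⁻¹ with hPrdef
      have hcard : (0:ℝ) < (Fintype.card S : ℝ) := by
        exact_mod_cast Fintype.card_pos
      have hPr : IsProb Pr := by
        constructor
        · intro s; positivity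
        · simp [hPrdef, Finset.card_univ]
      refine ⟨Pr, hPr, fun s => ?_⟩
      rw [hpz s]
      have := (alpha_key hmono hconst hPr).1
      positivity
    · set Pr : S → ℝ := fun s => p s / m with hPrdef
      have hPr : IsProb Pr := by
        constructor
        · intro s; exact div_nonneg (hp0 s) hm0
        · rw [hPrdef]
          simp only
          rw [← Finset.sum_div, ← hm, div_self (ne_of_gt hlt)]
      have hmA : m ∈ {α : ℝ | ∀ b ∈ Bneg S, I b ≤ α * ∑ s, Pr s * b s} := by
        intro b hb
        have : m * ∑ s, Pr s * b s = ∑ s, p s * b s := by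
          rw [Finset.mul_sum]
          congr 1; ext s
          rw [hPrdef]
          field_simp
        rw [this]
        exact hdual b hb
      have hbdd : BddAbove {α : ℝ | ∀ b ∈ Bneg S, I b ≤ α * ∑ s, Pr s * b s} := by
        refine ⟨1, fun α hα => ?_⟩
        have h1 : (fun _ : S => (-1:ℝ)) ∈ Bneg S := fun s => by norm_num
        have := hα _ h1
        rw [hconst (-1) (by norm_num)] at this
        have hsum : ∑ s, Pr s * (-1:ℝ) = -1 := by
          rw [← Finset.sum_mul, hPr.2]; ring
        rw [hsum] at this
        linarith
      have hmle : m ≤ alphaOf I Pr := le_csSup hbdd hmA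
      refine ⟨Pr, hPr, fun s => ?_⟩
      have : p s = m * Pr s := by
        rw [hPrdef]; field_simp
      rw [this]
      exact mul_le_mul_of_nonneg_right hmle (hPr.1 s)

end Aux

/-- The canonical set of sub-probability measures `C(P⁺)` is regular:
convex, closed, and downward-closed. -/
theorem CofP_regular
    {S : Type*} [Fintype S] (I : (S → ℝ) → ℝ)
    (hmono : ∀ b ∈ Bneg S, ∀ b' ∈ Bneg S, (∀ s, b' s ≤ b s) → I b' ≤ I b)
    (hhomog : ∀ b ∈ Bneg S, ∀ c : ℝ, 0 < c → I (c • b) = c * I b)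
    (hsuper : ∀ b ∈ Bneg S, ∀ b' ∈ Bneg S, I b + I b' ≤ I (b + b'))
    (hcont : ContinuousOn I (Bneg S))
    (hconst : ∀ c : ℝ, c ≤ 0 → I (fun _ => c) = c) :
    Convex ℝ (CofP I) ∧ IsClosed (CofP I) ∧
    (∀ p ∈ CofP I, ∀ q : S → ℝ, (∀ s, 0 ≤ q s) → (∀ s, q s ≤ p s) →
      q ∈ CofP I) := by
  cases isEmpty_or_nonempty S with
  | inl h =>
    exfalso
    have h1 : I (fun _ => (0:ℝ)) = 0 := hconst 0 le_rfl
    have h2 : I (fun _ => (-1:ℝ)) = -1 := hconst (-1) (by norm_num)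
    have : (fun _ : S => (0:ℝ)) = fun _ => (-1:ℝ) := funext fun s => h.elim s
    rw [this] at h1
    linarith
  | inr h =>
    rw [CofP_eq_Dset hmono hconst]
    refine ⟨?_, ?_, ?_⟩
    · rintro p ⟨hp0, hpd⟩ q ⟨hq0, hqd⟩ a b ha hb hab
      constructor
      · intro s
        have := hp0 s; have := hq0 s
        simp only [Pi.add_apply, Pi.smul_apply, smul_eq_mul]
        nlinarith
      · intro c hc
        have h1 := hpd c hc
        have h2 := hqd c hc
        have : ∑ s, (a • p + b • q) s * c s = a * ∑ s, p s * c s + b * ∑ s, q s * c s := by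
          rw [Finset.mul_sum, Finset.mul_sum, ← Finset.sum_add_distrib]
          congr 1; ext s
          simp only [Pi.add_apply, Pi.smul_apply, smul_eq_mul]; ring
        rw [this]
        have e1 : a * I c ≤ a * ∑ s, p s * c s := mul_le_mul_of_nonneg_left h1 ha
        have e2 : b * I c ≤ b * ∑ s, q s * c s := mul_le_mul_of_nonneg_left h2 hb
        have e3 : a * I c + b * I c = I c := by rw [← add_mul, hab, one_mul]
        linarith
    · have : Dset I = {p : S → ℝ | ∀ s, 0 ≤ p s} ∩
          ⋂ b ∈ Bneg S, {p : S → ℝ | I b ≤ ∑ s, p s * b s} := by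
        ext p
        simp [Dset, Set.mem_iInter]
      rw [this]
      apply IsClosed.inter
      · have : {p : S → ℝ | ∀ s, 0 ≤ p s} = ⋂ s, {p : S → ℝ | 0 ≤ p s} := by
          ext p; simp
        rw [this]
        exact isClosed_iInter fun s => isClosed_le continuous_const (continuous_apply s)
      · refine isClosed_biInter fun b hb => ?_
        exact isClosed_le continuous_const
          (continuous_finset_sum _ fun s _ => (continuous_apply s).mul continuous_const)
    · rintro p ⟨hp0, hpd⟩ q hq0 hqle
      refine ⟨hq0, fun b hb => ?_⟩
      calc I b ≤ ∑ s, p s * b s := hpd b hb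
        _ ≤ ∑ s, q s * b s :=
            Finset.sum_le_sum fun s _ => mul_le_mul_of_nonpos_right (hqle s) (hb s)
end

section
/- Suppose C1 and C2 are two regular (convex, closed, downward-closed) sets of sub-probability measures on a finite set S, each containing at least one proper probability measure, and both represent the same preference order on nonpositive utility acts via f ⪰ g iff min_{p∈C1} E_p[u∘f] ≥ min_{p∈C1} E_p[u∘g] (and similarly for C2). Then C1 = C2. -/
open Finset

theorem regular_subset_aux
    {S : Type*} [Fintype S] (C1 C2 : Set (S → ℝ))
    (hsub1 : ∀ p ∈ C1, (∀ s, 0 ≤ p s) ∧ ∑ s, p s ≤ 1)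
    (hsub2 : ∀ p ∈ C2, (∀ s, 0 ≤ p s) ∧ ∑ s, p s ≤ 1)
    (hconv1 : Convex ℝ C1) (hclosed1 : IsClosed C1)
    (hdc1 : ∀ p ∈ C1, ∀ q : S → ℝ, (∀ s, 0 ≤ q s) → (∀ s, q s ≤ p s) → q ∈ C1)
    (hne1 : C1.Nonempty)
    (hrep : ∀ θ : S → ℝ, (∀ s, θ s ≤ 0) →
      sInf {r : ℝ | ∃ p ∈ C1, r = ∑ s, p s * θ s} =
      sInf {r : ℝ | ∃ p ∈ C2, r = ∑ s, p s * θ s}) :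
    C2 ⊆ C1 := by
  classical
  intro q hq
  by_contra hqC1
  obtain ⟨f, u, hfq, hfC1⟩ := geometric_hahn_banach_point_closed hconv1 hclosed1 hqC1
  set a : S → ℝ := fun s => f (Pi.single s 1) with ha
  have hfx : ∀ x : S → ℝ, f x = ∑ s, x s * a s := by
    intro x
    have hx : (∑ s, x s • (Pi.single s 1 : S → ℝ)) = x := by
      ext t
      simp [Finset.sum_apply, Pi.single_apply]
    calc f x = f (∑ s, x s • (Pi.single s 1 : S → ℝ)) := by rw [hx]
      _ = ∑ s, x s * a s := by
          rw [map_sum]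
          exact Finset.sum_congr rfl fun s _ => by rw [map_smul, smul_eq_mul]
  set θ : S → ℝ := fun s => min (a s) 0 with hθ
  have hθ0 : ∀ s, θ s ≤ 0 := fun s => min_le_right _ _
  -- every value over C1 is above u
  have h1 : ∀ r ∈ {r : ℝ | ∃ p ∈ C1, r = ∑ s, p s * θ s}, u ≤ r := by
    rintro r ⟨p, hp, rfl⟩
    set p' : S → ℝ := fun s => if a s ≤ 0 then p s else 0 with hp'
    have hp'mem : p' ∈ C1 := by
      refine hdc1 p hp p' (fun s => ?_) (fun s => ?_)
      · simp only [hp']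
        split
        · exact (hsub1 p hp).1 s
        · exact le_rfl
      · simp only [hp']
        split
        · exact le_rfl
        · exact (hsub1 p hp).1 s
    have heq : ∑ s, p s * θ s = f p' := by
      rw [hfx]
      refine Finset.sum_congr rfl fun s _ => ?_
      simp only [hp', hθ]
      rcases le_or_gt (a s) 0 with h | h
      · rw [if_pos h, min_eq_left h]
      · rw [if_neg (not_le.mpr h), min_eq_right h.le, mul_zero, zero_mul]
    rw [heq]
    exact (hfC1 p' hp'mem).le
  have hne_set1 : {r : ℝ | ∃ p ∈ C1, r = ∑ s, p s * θ s}.Nonempty := by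
    obtain ⟨p0, hp0⟩ := hne1
    exact ⟨∑ s, p0 s * θ s, p0, hp0, rfl⟩
  have hInf1 : u ≤ sInf {r : ℝ | ∃ p ∈ C1, r = ∑ s, p s * θ s} :=
    le_csInf hne_set1 h1
  have hbdd2 : BddBelow {r : ℝ | ∃ p ∈ C2, r = ∑ s, p s * θ s} := by
    refine ⟨∑ s, θ s, ?_⟩
    rintro r ⟨p, hp, rfl⟩
    refine Finset.sum_le_sum fun s _ => ?_
    have hps1 : p s ≤ 1 := by
      calc p s ≤ ∑ t, p t :=
        Finset.single_le_sum (fun t _ => (hsub2 p hp).1 t) (Finset.mem_univ s)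
        _ ≤ 1 := (hsub2 p hp).2
    calc θ s = 1 * θ s := (one_mul _).symm
      _ ≤ p s * θ s := mul_le_mul_of_nonpos_right hps1 (hθ0 s)
  have hInf2 : sInf {r : ℝ | ∃ p ∈ C2, r = ∑ s, p s * θ s} ≤ ∑ s, q s * θ s :=
    csInf_le hbdd2 ⟨q, hq, rfl⟩
  have hqlt : ∑ s, q s * θ s < u := by
    have hle : ∑ s, q s * θ s ≤ ∑ s, q s * a s :=
      Finset.sum_le_sum fun s _ =>
        mul_le_mul_of_nonneg_left (min_le_left _ _) ((hsub2 q hq).1 s)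
    have := hfx q
    linarith
  have := hrep θ hθ0
  linarith

/-- Two regular (convex, closed, downward-closed) sets of sub-probability
measures, each containing a proper probability measure, that represent the
same preference on nonpositive utility acts (i.e. have the same minimum
expectation on every nonpositive act), are equal. -/
theorem regular_representation_unique
    {S : Type*} [Fintype S] (C1 C2 : Set (S → ℝ))
    (hsub1 : ∀ p ∈ C1, (∀ s, 0 ≤ p s) ∧ ∑ s, p s ≤ 1)
    (hsub2 : ∀ p ∈ C2, (∀ s, 0 ≤ p s) ∧ ∑ s, p s ≤ 1)
    (hconv1 : Convex ℝ C1) (hconv2 : Convex ℝ C2)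
    (hclosed1 : IsClosed C1) (hclosed2 : IsClosed C2)
    (hdc1 : ∀ p ∈ C1, ∀ q : S → ℝ, (∀ s, 0 ≤ q s) → (∀ s, q s ≤ p s) → q ∈ C1)
    (hdc2 : ∀ p ∈ C2, ∀ q : S → ℝ, (∀ s, 0 ≤ q s) → (∀ s, q s ≤ p s) → q ∈ C2)
    (hprob1 : ∃ p ∈ C1, ∑ s, p s = 1)
    (hprob2 : ∃ p ∈ C2, ∑ s, p s = 1)
    (hrep : ∀ θ : S → ℝ, (∀ s, θ s ≤ 0) →
      sInf {r : ℝ | ∃ p ∈ C1, r = ∑ s, p s * θ s} =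
      sInf {r : ℝ | ∃ p ∈ C2, r = ∑ s, p s * θ s}) :
    C1 = C2 := by
  obtain ⟨p1, hp1, _⟩ := hprob1
  obtain ⟨p2, hp2, _⟩ := hprob2
  refine Set.Subset.antisymm ?_ ?_
  · exact regular_subset_aux C2 C1 hsub2 hsub1 hconv2 hclosed2 hdc2 ⟨p2, hp2⟩
      (fun θ hθ => (hrep θ hθ).symm)
  · exact regular_subset_aux C1 C2 hsub1 hsub2 hconv1 hclosed1 hdc1 ⟨p1, hp1⟩
      (hrep)
end

section
/- The functional I defined on nonpositive utility acts by I(b) = inf{c : the constant act with utility c is weakly preferred to the act with utility profile b}, extended by positive homogeneity, satisfies: for any preference relation satisfying transitivity, completeness, monotonicity, mixture continuity, and agreement with expected utility on constant acts, every act f with nonpositive bounded utility profile b_f is indifferent to the constant act with utility I(b_f). -/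
open Finset

/-- For a preference relation (on acts identified with their utility profiles)
satisfying transitivity, completeness, monotonicity, mixture continuity, and
agreement with expected utility on constant acts, every act with utility
profile in `[-1,0]` is indifferent to the constant act with utility
`I(b) = inf {c : constant act c ⪰ b}`. -/
theorem act_indifferent_to_certainty_equivalent
    {S : Type*} [Fintype S]
    (pref : (S → ℝ) → (S → ℝ) → Prop)
    (htrans : ∀ f g h, pref f g → pref g h → pref f h)
    (hcomp : ∀ f g, pref f g ∨ pref g f)
    (hconstAgree : ∀ c c' : ℝ, pref (fun _ => c) (fun _ => c') ↔ c' ≤ c)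
    (hmono : ∀ f g : S → ℝ, (∀ s, g s ≤ f s) → pref f g)
    (hmix : ∀ f g h : S → ℝ,
      (pref f g ∧ ¬ pref g f) → (pref g h ∧ ¬ pref h g) →
      ∃ q ∈ Set.Ioo (0:ℝ) 1, ∃ r ∈ Set.Ioo (0:ℝ) 1,
        (pref (q • f + (1-q) • h) g ∧ ¬ pref g (q • f + (1-q) • h)) ∧
        (pref g (r • f + (1-r) • h) ∧ ¬ pref (r • f + (1-r) • h) g)) :
    ∀ b : S → ℝ, (∀ s, b s ∈ Set.Icc (-1 : ℝ) 0) →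
      pref b (fun _ => sInf {c : ℝ | pref (fun _ => c) b}) ∧
      pref (fun _ => sInf {c : ℝ | pref (fun _ => c) b}) b := by
  intro b hb
  set R := {c : ℝ | pref (fun _ => c) b} with hRdef
  have h0R : (0:ℝ) ∈ R := hmono _ b (fun s => (hb s).2)
  have hbneg1 : pref b (fun _ => (-1:ℝ)) := hmono b _ (fun s => (hb s).1)
  have hlb : ∀ c ∈ R, -1 ≤ c := fun c hc => (hconstAgree c (-1)).1 (htrans _ _ _ hc hbneg1)
  have hbdd : BddBelow R := ⟨-1, fun c hc => hlb c hc⟩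
  have hne : R.Nonempty := ⟨0, h0R⟩
  set I := sInf R with hIdef
  have hIle0 : I ≤ 0 := csInf_le hbdd h0R
  have hIge : -1 ≤ I := le_csInf hne hlb
  have hup : ∀ p : ℝ, p ∉ R → p ≤ I := by
    intro p hp
    apply le_csInf hne
    intro c hc
    by_contra h
    push_neg at h
    exact hp (htrans _ _ _ ((hconstAgree p c).2 h.le) hc)
  by_cases hb0 : pref b (fun _ => (0:ℝ))
  · have hI0 : I = 0 :=
      le_antisymm hIle0 (le_csInf hne (fun c hc => (hconstAgree c 0).1 (htrans _ _ _ hc hb0)))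
    rw [hI0]
    exact ⟨hb0, h0R⟩
  · have hIR : pref (fun _ => I) b := by
      by_contra hIc
      have hbI : pref b (fun _ => I) := (hcomp _ _).resolve_left hIc
      obtain ⟨q, hq, r, hr, h1, h2⟩ := hmix (fun _ => (0:ℝ)) b (fun _ => I) ⟨h0R, hb0⟩ ⟨hbI, hIc⟩
      have heq : (r • (fun _ => (0:ℝ)) + (1-r) • (fun _ => I)) = (fun _ : S => (1-r)*I) := by
        funext s
        simp [Pi.add_apply, Pi.smul_apply]
      rw [heq] at h2
      have hnot : ((1-r)*I) ∉ R := h2.2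
      have hle : (1-r)*I ≤ I := hup _ hnot
      have hge : I ≤ (1-r)*I := by nlinarith [hr.1, hr.2]
      have hI0 : I = 0 := by nlinarith [hr.1]
      apply hnot
      rw [hI0, mul_zero]
      exact h0R
    have hbI : pref b (fun _ => I) := by
      by_contra hc
      by_cases h1 : pref (fun _ => (-1:ℝ)) b
      · have hI1 : I = -1 := le_antisymm (csInf_le hbdd h1) hIge
        exact hc (hI1 ▸ hbneg1)
      · obtain ⟨q, hq, r, hr, hA, hB⟩ :=
          hmix (fun _ => I) b (fun _ => (-1:ℝ)) ⟨hIR, hc⟩ ⟨hbneg1, h1⟩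
        have heq : (q • (fun _ => I) + (1-q) • (fun _ => (-1:ℝ))) = (fun _ : S => q*I - (1-q)) := by
          funext s
          simp [Pi.add_apply, Pi.smul_apply]
          ring
        rw [heq] at hA
        have hmem : q*I - (1-q) ∈ R := hA.1
        have hle : I ≤ q*I - (1-q) := csInf_le hbdd hmem
        have hI1 : I = -1 := by nlinarith [hq.1, hq.2]
        exact hc (hI1 ▸ hbneg1)
    exact ⟨hbI, hIR⟩
end

section
/- MWER satisfies Independence of Never Strictly Optimal Alternatives: if every act in M' is weakly dominated statewise by some act in M (for all s there is f ∈ M with u(f(s)) ≥ u(h(s)) for each h ∈ M'), then for all f, g ∈ M, f ⪰_{M,P⁺} g if and only if f ⪰_{M∪M', P⁺} g. -/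
open Finset

noncomputable def best {S : Type*} [Fintype S] (M : Set (S → ℝ)) (s : S) : ℝ :=
  sSup ((fun g => g s) '' M)

noncomputable def wreg {S : Type*} [Fintype S]
    (P : Set ((S → ℝ) × ℝ)) (M : Set (S → ℝ)) (f : S → ℝ) : ℝ :=
  sSup {r | ∃ pa ∈ P, r = pa.2 * ∑ s, pa.1 s * (best M s - f s)}

lemma best_union_eq {S : Type*} [Fintype S]
    (M M' : Set (S → ℝ)) (hbdd : ∀ s, BddAbove ((fun g => g s) '' M))
    (hdom : ∀ h ∈ M', ∀ s : S, ∃ f ∈ M, h s ≤ f s)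
    (hne : M.Nonempty) (s : S) : best (M ∪ M') s = best M s := by
  unfold best
  rw [Set.image_union]
  have hub : BddAbove ((fun g => g s) '' M ∪ (fun g => g s) '' M') := by
    obtain ⟨b, hb⟩ := hbdd s
    refine ⟨b, ?_⟩
    rintro x (⟨h, hh, rfl⟩ | ⟨h, hh, rfl⟩)
    · exact hb ⟨h, hh, rfl⟩
    · obtain ⟨f, hf, hle⟩ := hdom h hh s
      exact hle.trans (hb ⟨f, hf, rfl⟩)
  apply le_antisymm
  · apply csSup_le (Set.Nonempty.inl (hne.image _))
    rintro x (⟨h, hh, rfl⟩ | ⟨h, hh, rfl⟩)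
    · exact le_csSup (hbdd s) ⟨h, hh, rfl⟩
    · obtain ⟨f, hf, hle⟩ := hdom h hh s
      exact hle.trans (le_csSup (hbdd s) ⟨f, hf, rfl⟩)
  · exact csSup_le_csSup hub (hne.image _) Set.subset_union_left

/-- MWER satisfies Independence of Never Strictly Optimal Alternatives: if
every act in `M'` is statewise weakly dominated by some act of `M`, then the
MWER comparison of acts in `M` is unchanged by adjoining `M'` to the menu. -/
theorem mwer_INA
    {S : Type*} [Fintype S]
    (P : Set ((S → ℝ) × ℝ))
    (hP : ∀ pa ∈ P, IsProb pa.1 ∧ pa.2 ∈ Set.Icc (0:ℝ) 1)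
    (M M' : Set (S → ℝ))
    (hbdd : ∀ s, BddAbove ((fun g => g s) '' M))
    (hdom : ∀ h ∈ M', ∀ s : S, ∃ f ∈ M, h s ≤ f s)
    (f g : S → ℝ) (hf : f ∈ M) (hg : g ∈ M) :
    wreg P M f ≤ wreg P M g ↔ wreg P (M ∪ M') f ≤ wreg P (M ∪ M') g := by
  have hbest : ∀ s, best (M ∪ M') s = best M s :=
    best_union_eq M M' hbdd hdom ⟨f, hf⟩
  have heq : ∀ x : S → ℝ, wreg P (M ∪ M') x = wreg P M x := by
    intro x
    unfold wreg
    congr 1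
    ext r
    simp only [hbest]
  rw [heq f, heq g]
end

section
/- MWER satisfies menu-dependent Independence: for any menu M, acts f, g ∈ M, act h, and p ∈ (0,1), f ⪰_{M,P⁺} g if and only if pf + (1-p)h ⪰_{pM+(1-p)h, P⁺} pg + (1-p)h, where pM + (1-p)h = {pf' + (1-p)h : f' ∈ M}. -/
/- Mixing every act with `h` moves each state's best utility by the same affine map
`x ↦ p x + (1 - p) h(s)`; this commutes with `sSup` since it is monotone and continuous (`0 ≤ p`),
so every regret is scaled by `p` and the constant `(1 - p) h(s)` cancels. -/

open Finset Pointwise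

section Mixture

variable {S : Type*} [Fintype S]

lemma best_mix {M : Set (S → ℝ)} (hM : M.Nonempty) (hbdd : ∀ s, BddAbove ((fun g => g s) '' M))
    (h : S → ℝ) {p : ℝ} (hp : 0 ≤ p) (s : S) :
    best ((fun f' => p • f' + (1 - p) • h) '' M) s = p * best M s + (1 - p) * h s := by
  have hmono : Monotone fun x : ℝ => p * x + (1 - p) * h s := fun a b hab => by
    simpa using mul_le_mul_of_nonneg_left hab hp
  have hcont : ContinuousAt (fun x : ℝ => p * x + (1 - p) * h s) (best M s) := by fun_prop
  unfold best at hcont ⊢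
  rw [hmono.map_csSup_of_continuousAt hcont (hM.image _) (hbdd s), Set.image_image,
    Set.image_image]
  simp only [Pi.add_apply, Pi.smul_apply, smul_eq_mul]

lemma wreg_eq_sSup_image (P : Set ((S → ℝ) × ℝ)) (M : Set (S → ℝ)) (f : S → ℝ) :
    wreg P M f = sSup ((fun pa => pa.2 * ∑ s, pa.1 s * (best M s - f s)) '' P) := by
  unfold wreg
  congr 1
  ext r
  simp [eq_comm]

lemma wreg_mix (P : Set ((S → ℝ) × ℝ)) {M : Set (S → ℝ)} (hM : M.Nonempty)
    (hbdd : ∀ s, BddAbove ((fun g => g s) '' M)) (f h : S → ℝ) {p : ℝ} (hp : 0 ≤ p) :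
    wreg P ((fun f' => p • f' + (1 - p) • h) '' M) (p • f + (1 - p) • h) = p * wreg P M f := by
  have hterm : ∀ pa : (S → ℝ) × ℝ,
      pa.2 * ∑ s, pa.1 s *
          (best ((fun f' => p • f' + (1 - p) • h) '' M) s - (p • f + (1 - p) • h) s) =
        p • (pa.2 * ∑ s, pa.1 s * (best M s - f s)) := fun pa => by
    simp only [best_mix hM hbdd h hp, Pi.add_apply, Pi.smul_apply, smul_eq_mul, Finset.mul_sum]
    exact Finset.sum_congr rfl fun s _ => by ring
  rw [wreg_eq_sSup_image, wreg_eq_sSup_image, funext hterm, ← Set.image_image (p • ·),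
    Set.image_smul, Real.sSup_smul_of_nonneg hp, smul_eq_mul]

end Mixture

theorem mwer_independence_general
    {S : Type*} [Fintype S]
    (P : Set ((S → ℝ) × ℝ))
    (M : Set (S → ℝ))
    (hbdd : ∀ s, BddAbove ((fun g => g s) '' M))
    (f g : S → ℝ) (hf : f ∈ M)
    (h : S → ℝ) (p : ℝ) (hp : p ∈ Set.Ioo (0:ℝ) 1) :
    wreg P M f ≤ wreg P M g ↔
    wreg P ((fun f' => p • f' + (1-p) • h) '' M) (p • f + (1-p) • h) ≤
      wreg P ((fun f' => p • f' + (1-p) • h) '' M) (p • g + (1-p) • h) := by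
  rw [wreg_mix P ⟨f, hf⟩ hbdd f h hp.1.le, wreg_mix P ⟨f, hf⟩ hbdd g h hp.1.le]
  exact (mul_le_mul_iff_right₀ hp.1).symm

/-- MWER satisfies menu-dependent Independence: `f ⪰_{M,P⁺} g` iff
`pf + (1-p)h ⪰_{pM+(1-p)h, P⁺} pg + (1-p)h`. -/
theorem mwer_independence
    {S : Type*} [Fintype S]
    (P : Set ((S → ℝ) × ℝ))
    (hP : ∀ pa ∈ P, IsProb pa.1 ∧ pa.2 ∈ Set.Icc (0:ℝ) 1)
    (M : Set (S → ℝ))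
    (hbdd : ∀ s, BddAbove ((fun g => g s) '' M))
    (f g : S → ℝ) (hf : f ∈ M) (hg : g ∈ M)
    (h : S → ℝ) (p : ℝ) (hp : p ∈ Set.Ioo (0:ℝ) 1) :
    wreg P M f ≤ wreg P M g ↔
    wreg P ((fun f' => p • f' + (1-p) • h) '' M) (p • f + (1-p) • h) ≤
      wreg P ((fun f' => p • f' + (1-p) • h) '' M) (p • g + (1-p) • h) :=
  mwer_independence_general P M hbdd f g hf h p hp
end

section
/- MWER satisfies Ambiguity Aversion: for any menu M, acts f, g ∈ M with equal maximum weighted expected regret (f ∼_{M,P⁺} g), and p ∈ (0,1), the mixture pf + (1-p)g satisfies regret_{M∪{pf+(1-p)g}, P⁺}(pf+(1-p)g) ≤ regret_{M∪{pf+(1-p)g}, P⁺}(g), i.e., pf+(1-p)g ⪰ g with respect to the enlarged menu. -/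
open Finset

/-! Every act of `M` is statewise dominated by `best M`, hence so is any mixture of two of them;
adding such a mixture to the menu therefore leaves `best` and with it every regret unchanged.
Regret is affine in the act for fixed `best`, so `wreg` is convex in the act, and a mixture of
two acts of equal maximal weighted regret has no larger maximal weighted regret than either. -/

section

variable {S : Type*} [Fintype S]

theorem IsProb.sum_mul_le_sum {q x : S → ℝ} (hq : IsProb q) (hx : ∀ s, 0 ≤ x s) :
    ∑ s, q s * x s ≤ ∑ s, x s := by
  refine sum_le_sum fun s _ => mul_le_of_le_one_left (hx s) ?_
  calc q s ≤ ∑ t, q t := single_le_sum (fun t _ => hq.1 t) (mem_univ s)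
    _ = 1 := hq.2

variable {M : Set (S → ℝ)}

theorem le_best (hbdd : ∀ s, BddAbove ((fun g => g s) '' M)) {h : S → ℝ} (hh : h ∈ M)
    (s : S) : h s ≤ best M s :=
  le_csSup (hbdd s) ⟨h, hh, rfl⟩

theorem smul_add_smul_le_best (hbdd : ∀ s, BddAbove ((fun g => g s) '' M))
    {f g : S → ℝ} (hf : f ∈ M) (hg : g ∈ M) {p : ℝ} (hp0 : 0 ≤ p) (hp1 : p ≤ 1) (s : S) :
    (p • f + (1 - p) • g) s ≤ best M s := by
  have hfs := le_best hbdd hf s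
  have hgs := le_best hbdd hg s
  simp only [Pi.add_apply, Pi.smul_apply, smul_eq_mul]
  nlinarith

theorem best_union_singleton (hbdd : ∀ s, BddAbove ((fun g => g s) '' M)) (hM : M.Nonempty)
    {m : S → ℝ} (hm : ∀ s, m s ≤ best M s) : best (M ∪ {m}) = best M := by
  funext s
  rw [best, Set.union_singleton, Set.image_insert_eq,
    csSup_insert (hbdd s) (hM.image _), ← best, sup_eq_right]
  exact hm s

variable (P : Set ((S → ℝ) × ℝ))

theorem wreg_congr_best {M' : Set (S → ℝ)} (h : best M' = best M) (f : S → ℝ) :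
    wreg P M' f = wreg P M f := by
  simp only [wreg, h]

variable (hP : ∀ pa ∈ P, IsProb pa.1 ∧ pa.2 ∈ Set.Icc (0:ℝ) 1)
include hP

theorem wreg_nonneg {f : S → ℝ} (hf : ∀ s, f s ≤ best M s) : 0 ≤ wreg P M f := by
  refine Real.sSup_nonneg ?_
  rintro r ⟨pa, hpa, rfl⟩
  obtain ⟨hq, ha0, -⟩ := hP pa hpa
  exact mul_nonneg ha0 (sum_nonneg fun s _ => mul_nonneg (hq.1 s) (sub_nonneg.2 (hf s)))

theorem le_wreg (hbdd : ∀ s, BddAbove ((fun g => g s) '' M)) {f : S → ℝ} (hf : f ∈ M)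
    {pa : (S → ℝ) × ℝ} (hpa : pa ∈ P) :
    pa.2 * ∑ s, pa.1 s * (best M s - f s) ≤ wreg P M f := by
  have hgap : ∀ s, 0 ≤ best M s - f s := fun s => sub_nonneg.2 (le_best hbdd hf s)
  refine le_csSup ⟨∑ s, (best M s - f s), ?_⟩ ⟨pa, hpa, rfl⟩
  rintro r ⟨pa', hpa', rfl⟩
  obtain ⟨hq, ha0, ha1⟩ := hP pa' hpa'
  calc pa'.2 * ∑ s, pa'.1 s * (best M s - f s)
      ≤ ∑ s, pa'.1 s * (best M s - f s) :=
        mul_le_of_le_one_left (sum_nonneg fun s _ => mul_nonneg (hq.1 s) (hgap s)) ha1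
    _ ≤ ∑ s, (best M s - f s) := hq.sum_mul_le_sum hgap

theorem wreg_smul_add_smul_le (hbdd : ∀ s, BddAbove ((fun g => g s) '' M))
    {f g : S → ℝ} (hf : f ∈ M) (hg : g ∈ M) {p : ℝ} (hp0 : 0 ≤ p) (hp1 : p ≤ 1) :
    wreg P M (p • f + (1 - p) • g) ≤ p * wreg P M f + (1 - p) * wreg P M g := by
  have hbound_nonneg : 0 ≤ p * wreg P M f + (1 - p) * wreg P M g :=
    add_nonneg (mul_nonneg hp0 (wreg_nonneg P hP (le_best hbdd hf)))
      (mul_nonneg (sub_nonneg.2 hp1) (wreg_nonneg P hP (le_best hbdd hg)))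
  refine Real.sSup_le ?_ hbound_nonneg
  rintro r ⟨pa, hpa, rfl⟩
  have hsplit : pa.2 * ∑ s, pa.1 s * (best M s - (p • f + (1 - p) • g) s) =
      p * (pa.2 * ∑ s, pa.1 s * (best M s - f s)) +
        (1 - p) * (pa.2 * ∑ s, pa.1 s * (best M s - g s)) := by
    simp only [Pi.add_apply, Pi.smul_apply, smul_eq_mul, mul_sum, ← sum_add_distrib]
    exact sum_congr rfl fun s _ => by ring
  rw [hsplit]
  gcongr
  exacts [le_wreg P hP hbdd hf hpa, le_wreg P hP hbdd hg hpa]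

end

/-- MWER satisfies Ambiguity Aversion: if `f ∼_{M,P⁺} g` then the mixture
`pf + (1-p)g` is weakly preferred to `g` with respect to the enlarged menu
`M ∪ {pf + (1-p)g}`. -/
theorem mwer_ambiguity_aversion
    {S : Type*} [Fintype S]
    (P : Set ((S → ℝ) × ℝ))
    (hP : ∀ pa ∈ P, IsProb pa.1 ∧ pa.2 ∈ Set.Icc (0:ℝ) 1)
    (M : Set (S → ℝ))
    (hbdd : ∀ s, BddAbove ((fun g => g s) '' M))
    (f g : S → ℝ) (hf : f ∈ M) (hg : g ∈ M)
    (heq : wreg P M f = wreg P M g)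
    (p : ℝ) (hp : p ∈ Set.Ioo (0:ℝ) 1) :
    wreg P (M ∪ {p • f + (1-p) • g}) (p • f + (1-p) • g) ≤
      wreg P (M ∪ {p • f + (1-p) • g}) g := by
  obtain ⟨hp0, hp1⟩ := hp
  have hbest : best (M ∪ {p • f + (1-p) • g}) = best M :=
    best_union_singleton hbdd ⟨f, hf⟩ (smul_add_smul_le_best hbdd hf hg hp0.le hp1.le)
  rw [wreg_congr_best P hbest, wreg_congr_best P hbest]
  calc wreg P M (p • f + (1-p) • g) ≤ p * wreg P M f + (1 - p) * wreg P M g :=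
        wreg_smul_add_smul_le P hP hbdd hf hg hp0.le hp1.le
    _ = wreg P M g := by rw [heq]; ring
end
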